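/- arXiv:1703.01868 — 6 statements merged into one kernel-verified Lean document; each statement's English description precedes it below -/
import Mathlib

section
/- If (X,d) is a metric space and p > 1, then S_b(x,y,z) = [d(x,y) + d(y,z) + d(x,z)]^p is an S_b-metric on X (for a suitable constant b ≥ 1, e.g. b = 3^(p−1)·2^p works, or more simply some b depending on p), and it satisfies the symmetry condition S_b(x,x,y) = S_b(y,y,x) for all x,y ∈ X. -/
/-!
Every pairwise distance in the triangle `x, y, z` is at most the sum of two distances to `a`, so the
perimeter of `x, y, z` is at most `2 d(x,a) + 2 d(y,a) + 2 d(z,a)`, and `S(x,x,a) = (2 d(x,a))^p`.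
Convexity of `t ↦ t^p` (the power mean inequality for three terms) then gives the `S_b` triangle
inequality with `b = 3^(p-1)`.
-/

open Finset

theorem Real.add_add_rpow_le {a b c p : ℝ} (ha : 0 ≤ a) (hb : 0 ≤ b) (hc : 0 ≤ c) (hp : 1 ≤ p) :
    (a + b + c) ^ p ≤ 3 ^ (p - 1) * (a ^ p + b ^ p + c ^ p) := by
  have h := Real.rpow_sum_le_const_mul_sum_rpow_of_nonneg (univ : Finset (Fin 3)) hp
    (f := ![a, b, c]) (by simp [Fin.forall_fin_succ, ha, hb, hc])
  simpa [Fin.sum_univ_three] using h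

section Perimeter

variable {X : Type*}

theorem perimeter_le_two_mul_dist_add [PseudoMetricSpace X] (x y z a : X) :
    dist x y + dist y z + dist x z ≤ 2 * dist x a + 2 * dist y a + 2 * dist z a := by
  linarith [dist_triangle_right x y a, dist_triangle_right y z a, dist_triangle_right x z a]

theorem perimeter_eq_zero_iff [MetricSpace X] {x y z : X} :
    dist x y + dist y z + dist x z = 0 ↔ x = y ∧ y = z := by
  constructor
  · intro h
    have hxy : 0 ≤ dist x y := dist_nonneg
    have hyz : 0 ≤ dist y z := dist_nonneg
    have hxz : 0 ≤ dist x z := dist_nonneg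
    exact ⟨dist_eq_zero.mp (by linarith), dist_eq_zero.mp (by linarith)⟩
  · rintro ⟨rfl, rfl⟩
    simp

end Perimeter

theorem stmt_2 {X : Type*} [MetricSpace X] (p : ℝ) (hp : 1 < p)
    (S : X → X → X → ℝ)
    (hS : ∀ x y z, S x y z = (dist x y + dist y z + dist x z) ^ p) :
    (∃ b : ℝ, 1 ≤ b ∧
      (∀ x y z : X, S x y z = 0 ↔ x = y ∧ y = z) ∧
      (∀ x y z a : X, S x y z ≤ b * (S x x a + S y y a + S z z a))) ∧
    (∀ x y : X, S x x y = S y y x) := by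
  have hS_self : ∀ x a : X, S x x a = (2 * dist x a) ^ p := fun x a => by
    rw [hS, dist_self, zero_add, two_mul]
  refine ⟨⟨3 ^ (p - 1), Real.one_le_rpow (by norm_num) (by linarith), fun x y z => ?_,
    fun x y z a => ?_⟩, fun x y => by rw [hS_self, hS_self, dist_comm]⟩
  · rw [hS, Real.rpow_eq_zero (by positivity) (by positivity), perimeter_eq_zero_iff]
  · rw [hS, hS_self, hS_self, hS_self]
    calc (dist x y + dist y z + dist x z) ^ p
        ≤ (2 * dist x a + 2 * dist y a + 2 * dist z a) ^ p :=
          Real.rpow_le_rpow (by positivity) (perimeter_le_two_mul_dist_add x y z a) (by linarith)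
      _ ≤ _ := Real.add_add_rpow_le (by positivity) (by positivity) (by positivity) hp.le
end

section
/- The S-metric S(x,y,z) = |x−z| + |x+z−2y| on ℝ is not generated by any metric: there is no metric d on ℝ with S(x,y,z) = d(x,z) + d(y,z) for all x,y,z ∈ ℝ. -/
/-!
If `S(x,y,z) = d(x,z) + d(y,z)` with `d(z,z) = 0`, then `S(x,x,z) = 2 d(x,z) = 2 S(x,z,z)`.
For `S(x,y,z) = |x - z| + |x + z - 2y|` this fails at `x = 0`, `z = 1`:
`S(0,0,1) = 2` but `S(0,1,1) = 2` as well.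
-/

theorem self_eq_two_mul_of_eq_add {X : Type*} {S : X → X → X → ℝ} {d : X → X → ℝ}
    (hd : ∀ x, d x x = 0) (hS : ∀ x y z, S x y z = d x z + d y z) (x z : X) :
    S x x z = 2 * S x z z := by
  rw [hS, hS, hd]
  ring

theorem stmt_5 :
    ¬ ∃ d : ℝ → ℝ → ℝ,
      (∀ x y, 0 ≤ d x y) ∧
      (∀ x y, d x y = 0 ↔ x = y) ∧
      (∀ x y, d x y = d y x) ∧
      (∀ x y z, d x z ≤ d x y + d y z) ∧
      (∀ x y z : ℝ, |x - z| + |x + z - 2*y| = d x z + d y z) := by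
  rintro ⟨d, -, hzero, -, -, hS⟩
  have key := self_eq_two_mul_of_eq_add (S := fun x y z : ℝ ↦ |x - z| + |x + z - 2*y|)
    (fun x ↦ (hzero x x).mpr rfl) hS 0 1
  norm_num at key
end

section
/- Let (X,S_b) be a symmetric S_b-metric space with coefficient b ≥ 1. Then d(x,y) := S_b(x,x,y) defines a b-metric on X with coefficient 3b/2, i.e., d(x,y) = 0 iff x = y, d(x,y) = d(y,x), and d(x,y) ≤ (3b/2)[d(x,z) + d(z,y)] for all x,y,z ∈ X. -/
/-! Adding the two instances of (S_b2) with auxiliary point `z`, namely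
`S(x,x,y) ≤ b[2 S(x,x,z) + S(y,y,z)]` and `S(y,y,x) ≤ b[2 S(y,y,z) + S(x,x,z)]`,
and using symmetry to identify `S(y,y,x)` with `S(x,x,y)`, gives
`2 S(x,x,y) ≤ 3b [S(x,x,z) + S(y,y,z)]`. -/

lemma self_self_le_three_halves_mul {X : Type*} {b : ℝ} {S : X → X → X → ℝ}
    (hS2 : ∀ x y z a, S x y z ≤ b * (S x x a + S y y a + S z z a))
    (hsym : ∀ x y, S x x y = S y y x) (x y z : X) :
    S x x y ≤ 3 * b / 2 * (S x x z + S y y z) := by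
  have hxy := hS2 x x y z
  have hyx := hS2 y y x z
  rw [← hsym x y] at hyx
  linear_combination (hxy + hyx) / 2

theorem stmt_6_general {X : Type*} (b : ℝ) (S : X → X → X → ℝ)
    (hS1 : ∀ x y z, S x y z = 0 ↔ x = y ∧ y = z)
    (hS2 : ∀ x y z a, S x y z ≤ b * (S x x a + S y y a + S z z a))
    (hsym : ∀ x y, S x x y = S y y x) :
    let d : X → X → ℝ := fun x y => S x x y
    (∀ x y, d x y = 0 ↔ x = y) ∧
    (∀ x y, d x y = d y x) ∧
    (∀ x y z, d x y ≤ (3*b/2) * (d x z + d z y)) := by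
  intro d
  refine ⟨fun x y => (hS1 x x y).trans (and_iff_right rfl), hsym, fun x y z => ?_⟩
  change S x x y ≤ 3 * b / 2 * (S x x z + S z z y)
  rw [hsym z y]
  exact self_self_le_three_halves_mul hS2 hsym x y z

theorem stmt_6 {X : Type*} (b : ℝ) (hb : 1 ≤ b) (S : X → X → X → ℝ)
    (hnonneg : ∀ x y z, 0 ≤ S x y z)
    (hS1 : ∀ x y z, S x y z = 0 ↔ x = y ∧ y = z)
    (hS2 : ∀ x y z a, S x y z ≤ b * (S x x a + S y y a + S z z a))
    (hsym : ∀ x y, S x x y = S y y x) :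
    let d : X → X → ℝ := fun x y => S x x y
    (∀ x y, d x y = 0 ↔ x = y) ∧
    (∀ x y, d x y = d y x) ∧
    (∀ x y z, d x y ≤ (3*b/2) * (d x z + d z y)) :=
  stmt_6_general b S hS1 hS2 hsym
end

section
/- For b ≥ 1, the S_b-metric S_b(x,y,z) = b(|x−z| + |x+z−2y|) on ℝ is not generated by any b-metric: there is no b-metric d on ℝ such that S_b(x,y,z) = d(x,z) + d(y,z) for all x,y,z ∈ ℝ. -/
/-!
If `S(x,y,z) = d(x,z) + d(y,z)` with `d(z,z) = 0`, then `S(x,x,z) = 2 d(x,z) = 2 S(x,z,z)`.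
For `S(x,y,z) = b(|x-z| + |x+z-2y|)` both `S(x,x,z)` and `S(x,z,z)` equal `2b|x-z|`,
so taking `x ≠ z` forces `b = 0`.
-/

lemma apply_self_left_eq_two_mul_apply_self_right {α : Type*} (S : α → α → α → ℝ)
    (d : α → α → ℝ) (hd : ∀ z, d z z = 0) (hS : ∀ x y z, S x y z = d x z + d y z) (x z : α) :
    S x x z = 2 * S x z z := by
  rw [hS, hS, hd, add_zero, two_mul]

theorem stmt_8 (b : ℝ) (hb : 1 ≤ b) :
    ¬ ∃ (d : ℝ → ℝ → ℝ) (c : ℝ), 1 ≤ c ∧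
      (∀ x y, 0 ≤ d x y) ∧
      (∀ x y, d x y = 0 ↔ x = y) ∧
      (∀ x y, d x y = d y x) ∧
      (∀ x y z, d x z ≤ c * (d x y + d y z)) ∧
      (∀ x y z : ℝ, b * (|x - z| + |x + z - 2*y|) = d x z + d y z) := by
  rintro ⟨d, -, -, -, hzero, -, -, hgen⟩
  have h := apply_self_left_eq_two_mul_apply_self_right
    (fun x y z => b * (|x - z| + |x + z - 2*y|)) d (fun z => (hzero z z).mpr rfl) hgen 0 1
  norm_num at h
  linarith
end

section
/- If T satisfies S_b(Tx,Tx,Ty) ≤ h·S_b(x,x,y) for all x,y with 0 ≤ h < 1/b², then for any x_0 ∈ X, the Picard iterates x_n = T^n x_0 satisfy S_b(x_n,x_n,x_{n+1}) ≤ h^n · S_b(x_0,x_0,x_1) for all n, and moreover for m > n, S_b(x_n,x_n,x_m) ≤ (2b·h^n)/(1−b²h) · S_b(x_0,x_0,x_1); in particular {x_n} is a Cauchy sequence. -/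
/-!
Contractivity makes the consecutive distances decay like `h ^ n`. The relaxed triangle
inequality, applied through `x (n+1)` and combined with `S u u v ≤ b * S v v u`, gives
`S(xₙ, xₙ, xₘ) ≤ 2b · S(xₙ, xₙ, xₙ₊₁) + b² · S(xₙ₊₁, xₙ₊₁, xₘ)`, so by downward induction on `n`
the bound `K · h ^ n · S(x₀, x₀, x₁)` propagates as long as `2b + b² h K ≤ K`. The smallest such
`K` is `2b / (1 - b² h)`, which is finite exactly because `b² h < 1`.
-/

open Filter Topology

section SbMetric

variable {X : Type*} {b : ℝ} {S : X → X → X → ℝ}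

def IsSbCauchy (S : X → X → X → ℝ) (x : ℕ → X) : Prop :=
  ∀ ε > (0 : ℝ), ∃ N, ∀ m ≥ N, ∀ n ≥ N, S (x n) (x n) (x m) < ε

lemma sb_le_mul_swap (hdiag : ∀ z, S z z z = 0)
    (hS2 : ∀ x y z a, S x y z ≤ b * (S x x a + S y y a + S z z a)) (u v : X) :
    S u u v ≤ b * S v v u := by
  simpa [hdiag] using hS2 u u v u

lemma sb_le_two_mul_add_sq_mul (hb : 0 ≤ b) (hdiag : ∀ z, S z z z = 0)
    (hS2 : ∀ x y z a, S x y z ≤ b * (S x x a + S y y a + S z z a)) (u v w : X) :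
    S u u w ≤ 2 * b * S u u v + b ^ 2 * S v v w := by
  have hswap : b * S w w v ≤ b * (b * S v v w) :=
    mul_le_mul_of_nonneg_left (sb_le_mul_swap hdiag hS2 w v) hb
  nlinarith [hS2 u u w v]

lemma iterate_sb_le_pow_mul {T : X → X} {h : ℝ} (hh : 0 ≤ h)
    (hT : ∀ x y, S (T x) (T x) (T y) ≤ h * S x x y) (n : ℕ) (x y : X) :
    S (T^[n] x) (T^[n] x) (T^[n] y) ≤ h ^ n * S x x y := by
  induction n generalizing x y with
  | zero => simp
  | succ n ih =>
    rw [Function.iterate_succ_apply, Function.iterate_succ_apply, pow_succ, mul_assoc]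
    exact (ih (T x) (T y)).trans (mul_le_mul_of_nonneg_left (hT x y) (pow_nonneg hh n))

lemma sb_le_mul_pow_of_step_le {h d K : ℝ} {x : ℕ → X} (hb : 0 ≤ b) (hh : 0 ≤ h) (hd : 0 ≤ d)
    (htri : ∀ u v w, S u u w ≤ 2 * b * S u u v + b ^ 2 * S v v w)
    (hstep : ∀ n, S (x n) (x n) (x (n + 1)) ≤ h ^ n * d)
    (hK : 1 ≤ K) (hKb : 2 * b + b ^ 2 * h * K ≤ K) {n m : ℕ} (hnm : n < m) :
    S (x n) (x n) (x m) ≤ K * d * h ^ n := by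
  obtain ⟨k, rfl⟩ := Nat.exists_eq_add_of_lt hnm
  induction k generalizing n with
  | zero =>
    have : 0 ≤ h ^ n * d := by positivity
    nlinarith [hstep n]
  | succ k ih =>
    have hnext := ih (n := n + 1) (by omega)
    rw [show n + 1 + k + 1 = n + (k + 1) + 1 by omega] at hnext
    have hhnd : 0 ≤ h ^ n * d := by positivity
    calc S (x n) (x n) (x (n + (k + 1) + 1))
        ≤ 2 * b * S (x n) (x n) (x (n + 1))
            + b ^ 2 * S (x (n + 1)) (x (n + 1)) (x (n + (k + 1) + 1)) := htri _ _ _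
      _ ≤ 2 * b * (h ^ n * d) + b ^ 2 * (K * d * h ^ (n + 1)) := by
          gcongr
          exact hstep n
      _ = (2 * b + b ^ 2 * h * K) * (h ^ n * d) := by ring
      _ ≤ K * d * h ^ n := by nlinarith

lemma isSbCauchy_of_le_mul_pow {h C : ℝ} {x : ℕ → X} (hb : 0 ≤ b) (hh : 0 ≤ h) (hh1 : h < 1)
    (hdiag : ∀ z, S z z z = 0) (hswap : ∀ u v, S u u v ≤ b * S v v u)
    (hbound : ∀ n m, n < m → S (x n) (x n) (x m) ≤ C * h ^ n) : IsSbCauchy S x := by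
  intro ε hε
  have hlim (c : ℝ) : Tendsto (fun n => c * h ^ n) atTop (𝓝 0) := by
    simpa using (tendsto_pow_atTop_nhds_zero_of_lt_one hh hh1).const_mul c
  obtain ⟨N, hN⟩ := eventually_atTop.mp
    (((hlim (b * C)).eventually_lt_const hε).and ((hlim C).eventually_lt_const hε))
  refine ⟨N, fun m hm n hn => ?_⟩
  rcases lt_trichotomy n m with hlt | rfl | hgt
  · exact (hbound n m hlt).trans_lt (hN n hn).2
  · rw [hdiag]; exact hε
  · calc S (x n) (x n) (x m) ≤ b * S (x m) (x m) (x n) := hswap _ _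
      _ ≤ b * (C * h ^ m) := mul_le_mul_of_nonneg_left (hbound m n hgt) hb
      _ < ε := by rw [← mul_assoc]; exact (hN m hm).1

end SbMetric

theorem stmt_12 {X : Type*} (b : ℝ) (hb : 1 ≤ b) (S : X → X → X → ℝ)
    (hnonneg : ∀ x y z, 0 ≤ S x y z)
    (hS1 : ∀ x y z, S x y z = 0 ↔ x = y ∧ y = z)
    (hS2 : ∀ x y z a, S x y z ≤ b * (S x x a + S y y a + S z z a))
    (T : X → X) (h : ℝ) (hh0 : 0 ≤ h) (hh : h < 1 / b^2)
    (hT : ∀ x y, S (T x) (T x) (T y) ≤ h * S x x y)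
    (x₀ : X) (x : ℕ → X) (hx : ∀ n, x n = T^[n] x₀) :
    (∀ n, S (x n) (x n) (x (n+1)) ≤ h^n * S (x 0) (x 0) (x 1)) ∧
    (∀ n m, n < m →
      S (x n) (x n) (x m) ≤ (2 * b * h^n) / (1 - b^2 * h) * S (x 0) (x 0) (x 1)) ∧
    (∀ ε > (0:ℝ), ∃ N, ∀ m ≥ N, ∀ n ≥ N, S (x n) (x n) (x m) < ε) := by
  have hb0 : 0 ≤ b := by linarith
  have hbh : b ^ 2 * h < 1 := by
    have := (lt_div_iff₀ (by positivity)).mp hh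
    linarith
  have hden : 0 < 1 - b ^ 2 * h := by linarith
  have hdiag : ∀ z, S z z z = 0 := fun z => (hS1 z z z).mpr ⟨rfl, rfl⟩
  have hstep : ∀ n, S (x n) (x n) (x (n + 1)) ≤ h ^ n * S (x 0) (x 0) (x 1) := fun n => by
    simpa [hx, Function.iterate_succ_apply] using iterate_sb_le_pow_mul hh0 hT n x₀ (T x₀)
  have hK : 1 ≤ 2 * b / (1 - b ^ 2 * h) := by
    rw [one_le_div hden]; nlinarith
  have hKb : 2 * b + b ^ 2 * h * (2 * b / (1 - b ^ 2 * h)) = 2 * b / (1 - b ^ 2 * h) := by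
    field_simp; ring
  have hbound := fun n m (hnm : n < m) => sb_le_mul_pow_of_step_le hb0 hh0 (hnonneg _ _ _)
    (sb_le_two_mul_add_sq_mul hb0 hdiag hS2) hstep hK hKb.le hnm
  refine ⟨hstep, fun n m hnm => (hbound n m hnm).trans_eq (by ring), ?_⟩
  exact isSbCauchy_of_le_mul_pow hb0 hh0 (by nlinarith) hdiag (sb_le_mul_swap hdiag hS2) hbound
end

section
/- Let S(x,y,z) = |x−z| + |x+z−2y| on ℝ and define T : ℝ → ℝ by Tx = x + 50 if |x−1| = 1 and Tx = 45 otherwise. Then T satisfies S(Tx,Tx,Ty) ≤ (1/5)·max{S(Tx,Tx,x), S(Tx,Tx,y), S(Ty,Ty,y), S(Ty,Ty,x)} for all x,y ∈ ℝ, T has the unique fixed point 45, but there is no h < 1 with S(Tx,Tx,Ty) ≤ h·S(x,x,y) for all x,y (witness x = 1, y = 0, where S(T1,T1,T0) = 10 and S(1,1,0) = 2). -/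
/-! `S(a, a, b) = 2|a - b|`, so all four conditions are statements about distances between
points and their images. `T` takes the value `45` except at `0` and `2`, where it jumps to `50`
and `52`; hence `|Tx - Ty| ≤ 7` always, and `Tx ≠ Ty` forces `x` or `y` into `{0, 2}`, where the
point moves by `50 ≥ 5 · 7`. The pair `(1, 0)` moves from distance `1` to distance `5`, which no
contraction allows. -/

noncomputable def T17 : ℝ → ℝ := fun x => if |x - 1| = 1 then x + 50 else 45

theorem abs_sub_add_abs_add_sub_two_mul (a b : ℝ) : |a - b| + |a + b - 2 * a| = 2 * |a - b| := by
  rw [show a + b - 2 * a = -(a - b) by ring, abs_neg]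
  ring

theorem T17_of_abs_sub_one_eq {x : ℝ} (hx : |x - 1| = 1) : T17 x = x + 50 := if_pos hx

theorem T17_of_abs_sub_one_ne {x : ℝ} (hx : |x - 1| ≠ 1) : T17 x = 45 := if_neg hx

theorem T17_mem_Icc (x : ℝ) : T17 x ∈ Set.Icc 45 52 := by
  by_cases hx : |x - 1| = 1
  · have := abs_le.mp hx.le
    rw [T17_of_abs_sub_one_eq hx]
    constructor <;> linarith
  · rw [T17_of_abs_sub_one_ne hx]
    norm_num

theorem abs_T17_sub_T17_le (x y : ℝ) : |T17 x - T17 y| ≤ 7 := by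
  obtain ⟨hx₁, hx₂⟩ := T17_mem_Icc x
  obtain ⟨hy₁, hy₂⟩ := T17_mem_Icc y
  exact abs_le.mpr ⟨by linarith, by linarith⟩

theorem five_mul_abs_T17_sub_T17_le (x y : ℝ) :
    5 * |T17 x - T17 y| ≤ max |T17 x - x| |T17 y - y| := by
  have hjump : ∀ {z : ℝ}, |z - 1| = 1 → |T17 z - z| = 50 := fun hz => by
    rw [T17_of_abs_sub_one_eq hz]
    norm_num
  have hbound := abs_T17_sub_T17_le x y
  by_cases hx : |x - 1| = 1
  · exact le_max_of_le_left (by linarith [hjump hx])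
  by_cases hy : |y - 1| = 1
  · exact le_max_of_le_right (by linarith [hjump hy])
  rw [T17_of_abs_sub_one_ne hx, T17_of_abs_sub_one_ne hy, sub_self, abs_zero, mul_zero]
  exact le_max_of_le_left (abs_nonneg _)

theorem T17_eq_self_iff (x : ℝ) : T17 x = x ↔ x = 45 := by
  constructor
  · intro hfix
    by_cases hx : |x - 1| = 1
    · rw [T17_of_abs_sub_one_eq hx] at hfix
      linarith
    · exact hfix.symm.trans (T17_of_abs_sub_one_ne hx)
  · rintro rfl
    exact T17_of_abs_sub_one_ne (by norm_num)

theorem stmt_17 :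
    let S : ℝ → ℝ → ℝ → ℝ := fun x y z => |x - z| + |x + z - 2*y|
    (∀ x y : ℝ, S (T17 x) (T17 x) (T17 y) ≤
      (1/5) * max (max (S (T17 x) (T17 x) x) (S (T17 x) (T17 x) y))
                  (max (S (T17 y) (T17 y) y) (S (T17 y) (T17 y) x))) ∧
    (∃! x : ℝ, T17 x = x) ∧ T17 45 = 45 ∧
    ¬ ∃ h : ℝ, h < 1 ∧ ∀ x y : ℝ, S (T17 x) (T17 x) (T17 y) ≤ h * S x x y := by
  intro S
  have hS : ∀ a b, S a a b = 2 * |a - b| := abs_sub_add_abs_add_sub_two_mul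
  have h45 : T17 45 = 45 := (T17_eq_self_iff 45).mpr rfl
  simp only [hS]
  refine ⟨fun x y => ?_, ⟨45, h45, fun x => (T17_eq_self_iff x).mp⟩, h45, ?_⟩
  · calc 2 * |T17 x - T17 y| ≤ 1 / 5 * (2 * max |T17 x - x| |T17 y - y|) := by
          linarith [five_mul_abs_T17_sub_T17_le x y]
      _ ≤ _ := by
          rw [mul_max_of_nonneg _ _ zero_le_two]
          gcongr <;> exact le_max_left _ _
  · rintro ⟨h, hh, hcontr⟩
    have h1 : T17 1 = 45 := T17_of_abs_sub_one_ne (by norm_num)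
    have h0 : T17 0 = 50 := by rw [T17_of_abs_sub_one_eq (by norm_num)]; norm_num
    have hpair := hcontr 1 0
    rw [h1, h0] at hpair
    norm_num at hpair
    linarith
end
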